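/- arXiv:1809.03238 — 2 statements merged into one kernel-verified Lean document; each statement's English description precedes it below -/
import Mathlib

section
/- Let k be a field of characteristic not 2, and define e(l) ∈ GW(k) by e(l) = m·h for l = 2m and e(l) = m·h + ⟨1⟩ for l = 2m+1, with h = ⟨1⟩+⟨-1⟩. If l1, l2, n1, n2 are positive integers with l1·n1 - l2·n2 = 1, then e(l1)·e(n1) - e(l2)·e(n2) = ⟨(-1)^{l2·n2}⟩ in GW(k). -/
/-- The defining relations of the Grothendieck–Witt ring of a field `k`
(`char k ≠ 2`), presented on generators `⟨a⟩` for `a ∈ kˣ`: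
`⟨a⟩⟨b⟩ = ⟨ab⟩`, `⟨1⟩ = 1`, and
`⟨a⟩ + ⟨b⟩ = ⟨a + b⟩(1 + ⟨ab⟩)` whenever `a + b ≠ 0`. -/
def GWRel (k : Type) [Field k] : FreeCommRing kˣ → FreeCommRing kˣ → Prop :=
  fun x y =>
    (∃ a b : kˣ, x = FreeCommRing.of a * FreeCommRing.of b ∧ y = FreeCommRing.of (a * b)) ∨
    (x = FreeCommRing.of 1 ∧ y = 1) ∨
    (∃ a b c : kˣ, (a : k) + (b : k) = (c : k) ∧
      x = FreeCommRing.of a + FreeCommRing.of b ∧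
      y = FreeCommRing.of c * (1 + FreeCommRing.of (a * b)))

/-- The Grothendieck–Witt ring of the field `k` (for `char k ≠ 2`), as the
quotient of the free commutative ring on `kˣ` by the defining relations. -/
def GW (k : Type) [Field k] := RingQuot (GWRel k)

noncomputable instance (k : Type) [Field k] : CommRing (GW k) :=
  inferInstanceAs (CommRing (RingQuot (GWRel k)))

/-- `⟨a⟩ ∈ GW(k)`, the class of the rank-one form `x ↦ a·x²`. -/
noncomputable def GW.form {k : Type} [Field k] (a : kˣ) : GW k :=
  RingQuot.mkRingHom (GWRel k) (FreeCommRing.of a)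

/-- The hyperbolic class `h = ⟨1⟩ + ⟨-1⟩` in `GW(k)`. -/
noncomputable def GW.hyp (k : Type) [Field k] : GW k :=
  GW.form 1 + GW.form (-1)

/-- The element `e(l) ∈ GW(k)`: `e(2m) = m·h` and `e(2m+1) = m·h + ⟨1⟩`,
where `h = ⟨1⟩ + ⟨-1⟩`. -/
noncomputable def GW.e (k : Type) [Field k] (l : ℕ) : GW k :=
  (l / 2) • GW.hyp k + (if l % 2 = 1 then GW.form (1 : kˣ) else 0)

/-! With `u = ⟨-1⟩`, which satisfies `u² = 1`, the element `e(l)` is the geometric sum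
`G(l) = 1 + u + ⋯ + u^(l-1)`. For any `u` with `u² = 1` these sums are multiplicative,
`G(l)·G(n) = G(l·n)`, so with `m = l₂n₂` the difference is `G(m + 1) - G(m) = u^m`. -/

open Finset

section InvolutionGeomSum

variable {R : Type*} [CommRing R] {u : R}

theorem pow_two_mul_of_mul_self_eq_one (hu : u * u = 1) (m : ℕ) : u ^ (2 * m) = 1 := by
  rw [pow_mul, sq, hu, one_pow]

theorem pow_mul_one_add_of_mul_self_eq_one (hu : u * u = 1) (m : ℕ) :
    u ^ m * (1 + u) = 1 + u := by
  induction m with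
  | zero => rw [pow_zero, one_mul]
  | succ m ih => rw [pow_succ, mul_assoc, mul_one_add, hu, add_comm u, ih]

theorem geom_sum_two_mul_of_mul_self_eq_one (hu : u * u = 1) (a : ℕ) :
    ∑ i ∈ range (2 * a), u ^ i = a * (1 + u) := by
  induction a with
  | zero => simp
  | succ a ih =>
    rw [Nat.mul_succ, sum_range_succ, sum_range_succ, ih, pow_succ,
      pow_two_mul_of_mul_self_eq_one hu]
    push_cast
    ring

theorem pow_mul_mul_geom_sum_of_mul_self_eq_one (hu : u * u = 1) (l n : ℕ) :
    u ^ (l * n) * ∑ i ∈ range l, u ^ i = u ^ n * ∑ i ∈ range l, u ^ i := by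
  obtain ⟨a, rfl | rfl⟩ := Nat.even_or_odd' l
  · rw [geom_sum_two_mul_of_mul_self_eq_one hu, mul_left_comm,
      pow_mul_one_add_of_mul_self_eq_one hu, mul_left_comm,
      pow_mul_one_add_of_mul_self_eq_one hu]
  · rw [add_mul, one_mul, pow_add, mul_assoc 2, pow_two_mul_of_mul_self_eq_one hu, one_mul]

theorem geom_sum_mul_geom_sum_of_mul_self_eq_one (hu : u * u = 1) (l n : ℕ) :
    (∑ i ∈ range l, u ^ i) * ∑ j ∈ range n, u ^ j = ∑ i ∈ range (l * n), u ^ i := by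
  induction n with
  | zero => simp
  | succ n ih =>
    rw [sum_range_succ, mul_add, ih, Nat.mul_succ, sum_range_add]
    simp_rw [pow_add, ← mul_sum, pow_mul_mul_geom_sum_of_mul_self_eq_one hu, mul_comm]

end InvolutionGeomSum

namespace GW

variable {k : Type} [Field k]

theorem form_mul (a b : kˣ) : form a * form b = form (a * b) :=
  (map_mul _ _ _).symm.trans (RingQuot.mkRingHom_rel (r := GWRel k) (Or.inl ⟨a, b, rfl, rfl⟩))

theorem form_one : form (1 : kˣ) = (1 : GW k) :=
  (RingQuot.mkRingHom_rel (r := GWRel k) (Or.inr (Or.inl ⟨rfl, rfl⟩))).trans (map_one _)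

theorem form_pow (a : kˣ) (m : ℕ) : form (a ^ m) = form a ^ m := by
  induction m with
  | zero => rw [pow_zero, pow_zero, form_one]
  | succ m ih => rw [pow_succ, pow_succ, ← ih, form_mul]

theorem form_neg_one_mul_self : form (-1 : kˣ) * form (-1) = 1 := by
  rw [form_mul, neg_one_mul, neg_neg, form_one]

theorem e_eq_geom_sum (l : ℕ) : e k l = ∑ i ∈ range l, form (-1 : kˣ) ^ i := by
  have hu := form_neg_one_mul_self (k := k)
  have hhyp : hyp k = 1 + form (-1) := by rw [hyp, form_one]
  obtain ⟨a, rfl | rfl⟩ := Nat.even_or_odd' l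
  · simp [e, hhyp, mul_one_add, geom_sum_two_mul_of_mul_self_eq_one hu]
  · have hdiv : (2 * a + 1) / 2 = a := by omega
    simp [e, hdiv, hhyp, form_one, mul_one_add, sum_range_succ,
      geom_sum_two_mul_of_mul_self_eq_one hu, pow_two_mul_of_mul_self_eq_one hu]

end GW

theorem stmt5_general (k : Type) [Field k]
    (l1 l2 n1 n2 : ℕ)
    (h : (l1 * n1 : ℤ) - (l2 * n2 : ℤ) = 1) :
    GW.e k l1 * GW.e k n1 - GW.e k l2 * GW.e k n2 = GW.form ((-1 : kˣ) ^ (l2 * n2)) := by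
  have hprod : l1 * n1 = l2 * n2 + 1 := by omega
  simp only [GW.e_eq_geom_sum,
    geom_sum_mul_geom_sum_of_mul_self_eq_one GW.form_neg_one_mul_self, hprod,
    sum_range_succ, add_sub_cancel_left, GW.form_pow]

/-- For `char k ≠ 2`: if `l1, l2, n1, n2` are positive integers with
`l1·n1 - l2·n2 = 1`, then `e(l1)·e(n1) - e(l2)·e(n2) = ⟨(-1)^{l2·n2}⟩` in `GW(k)`. -/
theorem stmt5 (k : Type) [Field k] (hchar : ringChar k ≠ 2)
    (l1 l2 n1 n2 : ℕ) (hl1 : 0 < l1) (hl2 : 0 < l2) (hn1 : 0 < n1) (hn2 : 0 < n2)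
    (h : (l1 * n1 : ℤ) - (l2 * n2 : ℤ) = 1) :
    GW.e k l1 * GW.e k n1 - GW.e k l2 * GW.e k n2 = GW.form ((-1 : kˣ) ^ (l2 * n2)) :=
  stmt5_general k l1 l2 n1 n2 h
end

section
/- Let k be a finite field and f a nonzero polynomial in k[x₁,…,xₙ]. Then there exists a natural number N such that for every finite field extension K/k with [K:k] ≥ N there is a point a ∈ Kⁿ with f(a) ≠ 0. -/
/-!
A nonzero polynomial over a finite field `K` whose total degree is less than `#K` does not
vanish on all of `Kⁿ`, since such polynomials are determined by their values. Over an extension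
`K/k` of degree `d` we have `#K = #k ^ d ≥ 2 ^ d`, so once `d > deg f` the polynomial `f`, viewed
over `K`, has a nonzero value.
-/

universe u

namespace MvPolynomial

theorem totalDegree_map_le {R S σ : Type*} [CommSemiring R] [CommSemiring S] (f : R →+* S)
    (p : MvPolynomial σ R) : (map f p).totalDegree ≤ p.totalDegree :=
  Finset.sup_mono (support_map_subset f p)

variable {σ K : Type u} [Field K] [Fintype K] [Finite σ]

theorem exists_eval_ne_zero_of_totalDegree_lt_card {p : MvPolynomial σ K} (hp : p ≠ 0)
    (hdeg : p.totalDegree < Fintype.card K) : ∃ x : σ → K, eval x p ≠ 0 := by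
  by_contra! hzero
  refine hp (eq_zero_of_eval_eq_zero σ K p hzero (restrictTotalDegree_le_restrictDegree σ K _ ?_))
  rw [mem_restrictTotalDegree]
  omega

theorem exists_aeval_ne_zero_of_totalDegree_lt_card {k : Type*} [Field k] [Algebra k K]
    {f : MvPolynomial σ k} (hf : f ≠ 0) (hdeg : f.totalDegree < Fintype.card K) :
    ∃ x : σ → K, aeval x f ≠ 0 := by
  have hmap : map (algebraMap k K) f ≠ 0 :=
    (map_injective _ (algebraMap k K).injective).ne_iff' (map_zero _) |>.mpr hf
  obtain ⟨x, hx⟩ :=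
    exists_eval_ne_zero_of_totalDegree_lt_card hmap ((totalDegree_map_le _ f).trans_lt hdeg)
  exact ⟨x, by rwa [aeval_def, eval₂_eq_eval_map]⟩

end MvPolynomial

theorem Module.two_pow_finrank_le_card (k V : Type*) [Field k] [Fintype k] [AddCommGroup V]
    [Module k V] [Fintype V] : 2 ^ Module.finrank k V ≤ Fintype.card V := by
  rw [Module.card_eq_pow_finrank (K := k)]
  exact Nat.pow_le_pow_left Fintype.one_lt_card _

/-- Let `k` be a finite field and `f` a nonzero polynomial in `n` variables over `k`.
Then there is `N` such that for every finite field extension `K/k` of degree at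
least `N` there is a point `a ∈ Kⁿ` with `f(a) ≠ 0`. -/
theorem stmt7 (k : Type) [Field k] [Finite k] (n : ℕ)
    (f : MvPolynomial (Fin n) k) (hf : f ≠ 0) :
    ∃ N : ℕ, ∀ (K : Type) [Field K] [Algebra k K] [FiniteDimensional k K],
      N ≤ Module.finrank k K → ∃ a : Fin n → K, MvPolynomial.aeval a f ≠ 0 := by
  refine ⟨f.totalDegree + 1, fun K _ _ _ hK => ?_⟩
  have : Fintype k := Fintype.ofFinite k
  have : Finite K := Module.finite_of_finite k
  have : Fintype K := Fintype.ofFinite K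
  refine MvPolynomial.exists_aeval_ne_zero_of_totalDegree_lt_card hf ?_
  calc f.totalDegree < 2 ^ f.totalDegree := Nat.lt_two_pow_self
    _ ≤ 2 ^ Module.finrank k K := Nat.pow_le_pow_right two_pos (by omega)
    _ ≤ Fintype.card K := Module.two_pow_finrank_le_card k K
end
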